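/- Let F be the free group on three generators x_1, x_2, x_3, and let R* be the symmetrized closure of {x_1^2 x_2 x_3^2 x_2^{-1}, x_2^2 x_3 x_1^2 x_3^{-1}}, i.e. the set of all cyclic permutations of these two reduced words and of their inverses. Then the group G = ⟨x_1, x_2, x_3 ; x_1^2 x_2 x_3^2 x_2^{-1}, x_2^2 x_3 x_1^2 x_3^{-1}⟩ satisfies the small cancellation condition C(4): no element of R* is equal to a product u_1 u_2 … u_m of fewer than 4 pieces concatenated without cancellation (that is, there is no factorization r = u_1 u_2 ⋯ u_m with m ≤ 3, each u_i a piece, and |r| = |u_1| + |u_2| + ⋯ + |u_m|). -/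

import Mathlib

namespace SmallCancellationExample

/-- The free group on three generators `x₁, x₂, x₃`. -/
abbrev F : Type := FreeGroup (Fin 3)

def x1 : F := FreeGroup.of 0
def x2 : F := FreeGroup.of 1
def x3 : F := FreeGroup.of 2

/-- The relator `r₁ = x₁² x₂ x₃² x₂⁻¹`. -/
def r1 : F := x1 ^ 2 * x2 * x3 ^ 2 * x2⁻¹

/-- The relator `r₂ = x₂² x₃ x₁² x₃⁻¹`. -/
def r2 : F := x2 ^ 2 * x3 * x1 ^ 2 * x3⁻¹

/-- The reduced word length of an element of the free group. -/
def nlen (g : F) : ℕ := g.toWord.length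

/-- The symmetrized closure `R*` of `{r₁, r₂}`: all cyclic permutations of the reduced
words `r₁, r₂` and of their inverses. -/
def Rstar : Set F :=
  { s | ∃ t : ℕ,
      s = FreeGroup.mk (r1.toWord.rotate t) ∨ s = FreeGroup.mk (r2.toWord.rotate t) ∨
      s = FreeGroup.mk ((r1⁻¹).toWord.rotate t) ∨ s = FreeGroup.mk ((r2⁻¹).toWord.rotate t) }

/-- `u` is a *piece* (with respect to `R*`): `u` is a non-empty word that is a common
initial segment, without cancellation, of two distinct elements of `R*`. -/
def IsPiece (u : F) : Prop :=
  u ≠ 1 ∧ ∃ ra ∈ Rstar, ∃ rb ∈ Rstar, ra ≠ rb ∧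
    (∃ v, ra = u * v ∧ nlen ra = nlen u + nlen v) ∧
    (∃ v, rb = u * v ∧ nlen rb = nlen u + nlen v)

/-! ### Auxiliary word-level machinery -/

abbrev W : Type := List (Fin 3 × Bool)

def wA : W := [(0, true), (0, true), (1, true), (2, true), (2, true), (1, false)]
def wB : W := [(1, true), (1, true), (2, true), (0, true), (0, true), (2, false)]
def wC : W := [(1, true), (2, false), (2, false), (1, false), (0, false), (0, false)]
def wD : W := [(2, true), (0, false), (0, false), (2, false), (1, false), (1, false)]

/-- The 24 cyclic rotations of the four basic words, listed explicitly. -/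
def L24 : List W :=
  [[(0, true), (0, true), (1, true), (2, true), (2, true), (1, false)],
  [(1, true), (1, true), (2, true), (0, true), (0, true), (2, false)],
  [(1, true), (2, false), (2, false), (1, false), (0, false), (0, false)],
  [(2, true), (0, false), (0, false), (2, false), (1, false), (1, false)],
  [(0, true), (1, true), (2, true), (2, true), (1, false), (0, true)],
  [(1, true), (2, true), (0, true), (0, true), (2, false), (1, true)],
  [(2, false), (2, false), (1, false), (0, false), (0, false), (1, true)],
  [(0, false), (0, false), (2, false), (1, false), (1, false), (2, true)],
  [(1, true), (2, true), (2, true), (1, false), (0, true), (0, true)],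
  [(2, true), (0, true), (0, true), (2, false), (1, true), (1, true)],
  [(2, false), (1, false), (0, false), (0, false), (1, true), (2, false)],
  [(0, false), (2, false), (1, false), (1, false), (2, true), (0, false)],
  [(2, true), (2, true), (1, false), (0, true), (0, true), (1, true)],
  [(0, true), (0, true), (2, false), (1, true), (1, true), (2, true)],
  [(1, false), (0, false), (0, false), (1, true), (2, false), (2, false)],
  [(2, false), (1, false), (1, false), (2, true), (0, false), (0, false)],
  [(2, true), (1, false), (0, true), (0, true), (1, true), (2, true)],
  [(0, true), (2, false), (1, true), (1, true), (2, true), (0, true)],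
  [(0, false), (0, false), (1, true), (2, false), (2, false), (1, false)],
  [(1, false), (1, false), (2, true), (0, false), (0, false), (2, false)],
  [(1, false), (0, true), (0, true), (1, true), (2, true), (2, true)],
  [(2, false), (1, true), (1, true), (2, true), (0, true), (0, true)],
  [(0, false), (1, true), (2, false), (2, false), (1, false), (0, false)],
  [(1, false), (2, true), (0, false), (0, false), (2, false), (1, false)]]

lemma r1_toWord : r1.toWord = wA := by decide
lemma r2_toWord : r2.toWord = wB := by decide
lemma r1inv_toWord : (r1⁻¹).toWord = wC := by decide
lemma r2inv_toWord : (r2⁻¹).toWord = wD := by decide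

set_option maxHeartbeats 1000000 in
lemma reduce_rotate_mem :
    ∀ k, k < 6 →
      FreeGroup.reduce (wA.rotate k) ∈ L24 ∧ FreeGroup.reduce (wB.rotate k) ∈ L24 ∧
      FreeGroup.reduce (wC.rotate k) ∈ L24 ∧ FreeGroup.reduce (wD.rotate k) ∈ L24 := by
  intro k hk
  interval_cases k <;> decide

lemma mem_L24_of_mem_Rstar {s : F} (hs : s ∈ Rstar) : s.toWord ∈ L24 := by
  obtain ⟨t, h⟩ := hs
  have hk : t % 6 < 6 := Nat.mod_lt _ (by norm_num)
  rcases h with h | h | h | h <;> subst h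
  · rw [r1_toWord, FreeGroup.toWord_mk, ← List.rotate_mod]
    exact (reduce_rotate_mem _ hk).1
  · rw [r2_toWord, FreeGroup.toWord_mk, ← List.rotate_mod]
    exact (reduce_rotate_mem _ hk).2.1
  · rw [r1inv_toWord, FreeGroup.toWord_mk, ← List.rotate_mod]
    exact (reduce_rotate_mem _ hk).2.2.1
  · rw [r2inv_toWord, FreeGroup.toWord_mk, ← List.rotate_mod]
    exact (reduce_rotate_mem _ hk).2.2.2

/-- Word-level notion of a piece. -/
def WPiece (w : W) : Prop :=
  w ≠ [] ∧ ∃ wa ∈ L24, ∃ wb ∈ L24, wa ≠ wb ∧ w <+: wa ∧ w <+: wb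

instance : DecidablePred WPiece := fun w => by unfold WPiece; infer_instance

/-- No-cancellation multiplication corresponds to concatenation of words. -/
lemma toWord_mul_of_nlen {u v : F} (h : nlen (u * v) = nlen u + nlen v) :
    (u * v).toWord = u.toWord ++ v.toWord :=
  (FreeGroup.toWord_mul_sublist u v).eq_of_length (by simpa [nlen] using h)

lemma nlen_mul_le (u v : F) : nlen (u * v) ≤ nlen u + nlen v := by
  simpa [nlen] using (FreeGroup.toWord_mul_sublist u v).length_le

lemma isPiece_wpiece {u : F} (h : IsPiece u) : WPiece u.toWord := by
  obtain ⟨hne, ra, hra, rb, hrb, hab, ⟨va, hva, hla⟩, ⟨vb, hvb, hlb⟩⟩ := h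
  refine ⟨by simpa using hne, ra.toWord, mem_L24_of_mem_Rstar hra,
    rb.toWord, mem_L24_of_mem_Rstar hrb, fun hEq => hab (FreeGroup.toWord_injective hEq), ?_, ?_⟩
  · rw [hva, toWord_mul_of_nlen (hva ▸ hla)]; exact ⟨va.toWord, rfl⟩
  · rw [hvb, toWord_mul_of_nlen (hvb ▸ hlb)]; exact ⟨vb.toWord, rfl⟩

set_option maxHeartbeats 2000000 in
/-- No length-3 prefix of a word of `L24` is a piece. -/
lemma no_len3_piece : ∀ w ∈ L24, ¬ WPiece (w.take 3) := by decide

set_option maxHeartbeats 2000000 in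
/-- No word of `L24` splits into three length-2 pieces. -/
lemma no_222 : ∀ w ∈ L24,
    ¬ (WPiece (w.take 2) ∧ WPiece ((w.drop 2).take 2) ∧ WPiece ((w.drop 2).drop 2)) := by
  decide

lemma length_mem_L24 : ∀ w ∈ L24, w.length = 6 := by decide

/-- Every piece has word length at most 2. -/
lemma wpiece_length_le {u : W} (h : WPiece u) : u.length ≤ 2 := by
  by_contra hlen
  push_neg at hlen
  obtain ⟨hne, wa, hwa, wb, hwb, hab, hpa, hpb⟩ := h
  obtain ⟨ta, hta⟩ := hpa
  obtain ⟨tb, htb⟩ := hpb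
  have h3 : 3 ≤ u.length := hlen
  have htake : wa.take 3 = u.take 3 := by
    rw [← hta, List.take_append, Nat.sub_eq_zero_of_le h3,
      List.take_zero, List.append_nil]
  apply no_len3_piece wa hwa
  refine ⟨?_, wa, hwa, wb, hwb, hab, List.take_prefix _ _, ?_⟩
  · intro hnil
    have hwlen : u.length ≤ wa.length := by
      rw [← hta, List.length_append]; omega
    have := congrArg List.length hnil
    simp only [List.length_take, List.length_nil] at this
    omega
  · rw [htake]
    exact (List.take_prefix 3 u).trans ⟨tb, htb⟩

lemma take_of_length_eq {α} {a : List α} (b : List α) {n : ℕ} (h : a.length = n) :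
    (a ++ b).take n = a := by subst h; exact List.take_left (l₁ := a) (l₂ := b)

lemma drop_of_length_eq {α} {a : List α} (b : List α) {n : ℕ} (h : a.length = n) :
    (a ++ b).drop n = b := by subst h; exact List.drop_left (l₁ := a) (l₂ := b)

/-- **The group `⟨x₁,x₂,x₃ ; x₁²x₂x₃²x₂⁻¹, x₂²x₃x₁²x₃⁻¹⟩ satisfies C(4).**
No element of the symmetrized closure `R*` is equal to a product `u₁ u₂ ⋯ u_m` of fewer
than `4` pieces concatenated without cancellation: there is no factorization
`r = u₁ u₂ ⋯ u_m` with `m ≤ 3`, each `u_t` a piece, and `|r| = |u₁| + ⋯ + |u_m|`. -/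
theorem satisfies_C4 :
    ∀ r ∈ Rstar, ¬ ∃ (m : ℕ) (u : Fin m → F), m ≤ 3 ∧ (∀ t, IsPiece (u t)) ∧
      r = (List.ofFn u).prod ∧ nlen r = ((List.ofFn u).map nlen).sum := by
  intro r hr ⟨m, u, hm, hp, hprod, hlen⟩
  have hw : r.toWord ∈ L24 := mem_L24_of_mem_Rstar hr
  have h6 : r.toWord.length = 6 := length_mem_L24 _ hw
  have hle : ∀ t : Fin m, nlen (u t) ≤ 2 := fun t =>
    wpiece_length_le (isPiece_wpiece (hp t))
  interval_cases m
  · simp only [List.ofFn_zero, List.prod_nil] at hprod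
    rw [hprod] at h6
    simp [FreeGroup.toWord_one] at h6
  · simp only [List.ofFn_succ, List.ofFn_zero, List.prod_cons, List.prod_nil, mul_one,
      List.map_cons, List.map_nil, List.sum_cons, List.sum_nil, add_zero, Fin.succ_zero_eq_one, Fin.succ_one_eq_two] at hprod hlen
    have := hle 0
    rw [← hlen] at this
    simp only [nlen] at this
    omega
  · simp only [List.ofFn_succ, List.ofFn_zero, List.prod_cons, List.prod_nil, mul_one,
      List.map_cons, List.map_nil, List.sum_cons, List.sum_nil, add_zero, Fin.succ_zero_eq_one, Fin.succ_one_eq_two] at hprod hlen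
    have h0 := hle 0
    have h1 := hle 1
    have hr6 : nlen r = 6 := h6
    rw [hlen] at hr6
    omega
  · simp only [List.ofFn_succ, List.ofFn_zero, List.prod_cons, List.prod_nil, mul_one,
      List.map_cons, List.map_nil, List.sum_cons, List.sum_nil, add_zero, Fin.succ_zero_eq_one, Fin.succ_one_eq_two] at hprod hlen
    have h0 := hle 0
    have h1 := hle 1
    have h2 := hle 2
    have hr6 : nlen r = 6 := h6
    rw [hlen] at hr6
    have l0 : (u 0).toWord.length = 2 := by simp only [nlen] at *; omega
    have l1 : (u 1).toWord.length = 2 := by simp only [nlen] at *; omega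
    have hb : nlen (u 1 * u 2) = nlen (u 1) + nlen (u 2) := by
      have hub := nlen_mul_le (u 1) (u 2)
      have hua : nlen r ≤ nlen (u 0) + nlen (u 1 * u 2) := by
        rw [hprod]; exact nlen_mul_le _ _
      rw [hlen] at hua
      omega
    have ha : nlen (u 0 * (u 1 * u 2)) = nlen (u 0) + nlen (u 1 * u 2) := by
      rw [← hprod, hlen, hb]
    have hsplit : r.toWord = (u 0).toWord ++ ((u 1).toWord ++ (u 2).toWord) := by
      rw [hprod, toWord_mul_of_nlen ha, toWord_mul_of_nlen hb]
    have e1 : r.toWord.take 2 = (u 0).toWord := by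
      rw [hsplit]; exact take_of_length_eq _ l0
    have e0 : r.toWord.drop 2 = (u 1).toWord ++ (u 2).toWord := by
      rw [hsplit]; exact drop_of_length_eq _ l0
    have e2 : (r.toWord.drop 2).take 2 = (u 1).toWord := by
      rw [e0]; exact take_of_length_eq _ l1
    have e3 : (r.toWord.drop 2).drop 2 = (u 2).toWord := by
      rw [e0]; exact drop_of_length_eq _ l1
    exact no_222 _ hw ⟨e1 ▸ isPiece_wpiece (hp 0), e2 ▸ isPiece_wpiece (hp 1),
      e3 ▸ isPiece_wpiece (hp 2)⟩

end SmallCancellationExample
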